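/- Let Q be a quiver, G a group, δ: Q₁ → G an arrow weighting, and θ: kQ ⋊ kG → kQ ⋊' kG a linear isomorphism commuting with the projections onto kQ which on basis elements has the form θ(p ⋊ g) = p ⋊' g_p·g for some elements g_p ∈ G depending only on the path p. If θ is a coalgebra map, then g_p depends only on the starting vertex of p, i.e. g_p = g_{s(p)} for all paths p. -/

import Mathlib

/-!
Apply the functional `x ⊗ y ↦ x(p ⋊ g_p) • y` to both sides of `Δ' θ = (θ ⊗ θ) Δ` at `p ⋊ 1`.
In `Δ(p ⋊ g)` the only term whose left factor is `p ⋊ g` is `(p ⋊ g) ⊗ (s(p) ⋊ g)`, because the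
trivial decomposition `p = p · s(p)` carries the weight of a length-zero path, which is `1`. Since
`θ` permutes the basis, the left side yields `s(p) ⋊ g_p` and the right side
`θ(s(p) ⋊ 1) = s(p) ⋊ g_{s(p)}`.
-/

open TensorProduct Quiver

noncomputable section
open scoped Classical

universe u v

variable (k : Type*) [Field k]

/-- The set of all paths in a quiver, with endpoints bundled. -/
abbrev PathsIn (V : Type u) [Quiver.{v + 1} V] : Type (max u (v + 1)) := Σ a b : V, Quiver.Path a b

/-- The underlying vector space of the path coalgebra: the free `k`-module on paths. -/
abbrev PathCoalg (V : Type u) [Quiver.{v + 1} V] : Type _ := PathsIn V →₀ k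

variable {V : Type u} [Quiver.{v + 1} V]

/-- The basis vector corresponding to a path. -/
def ιp (t : PathsIn V) : PathCoalg k V := Finsupp.single t 1

/-- The linear map on the path coalgebra induced by appending the arrow `e` to
paths ending at the source of `e` (and killing all other paths). -/
def consMap {b c : V} (e : b ⟶ c) : PathCoalg k V →ₗ[k] PathCoalg k V :=
  Finsupp.lsum k fun t =>
    if h : t.2.1 = b then Finsupp.lsingle ⟨t.1, c, (h ▸ t.2.2).cons e⟩ else 0

/-- Comultiplication on basis paths:
`Δ(p) = Σ_{p = p₂p₁} p₂ ⊗ p₁ + t(p) ⊗ p + p ⊗ s(p)`, i.e. the sum of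
`(second segment) ⊗ (first segment)` over all (possibly trivial) decompositions. -/
def deltaAux : ∀ {a b : V}, Quiver.Path a b → PathCoalg k V ⊗[k] PathCoalg k V
  | a, _, .nil => ιp k ⟨a, a, .nil⟩ ⊗ₜ[k] ιp k ⟨a, a, .nil⟩
  | a, c, .cons p e =>
      ιp k ⟨c, c, .nil⟩ ⊗ₜ[k] ιp k ⟨a, c, p.cons e⟩
      + TensorProduct.map (consMap k e) LinearMap.id (deltaAux p)

/-- The comultiplication of the path coalgebra. -/
def ΔP : PathCoalg k V →ₗ[k] PathCoalg k V ⊗[k] PathCoalg k V :=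
  Finsupp.lsum k fun t => LinearMap.toSpanSingleton k _ (deltaAux k t.2.2)

/-- The counit of the path coalgebra: `ε(p) = δ_{|p|,0}`. -/
def εP : PathCoalg k V →ₗ[k] k :=
  Finsupp.lsum k fun t => if t.2.2.length = 0 then LinearMap.id else 0

variable {G : Type*} [Group G]

/-- The multiplicative extension of an arrow weighting `δ : Q₁ → G` to paths:
`δ(a_n ⋯ a_1) = δ(a_n) ⋯ δ(a_1)`, with value `1` on length-zero paths. -/
def wt (δ : ∀ {a b : V}, (a ⟶ b) → G) : ∀ {a b : V}, Quiver.Path a b → G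
  | _, _, .nil => 1
  | _, _, .cons p e => δ e * wt @δ p

/-- The underlying vector space of the smash coproduct coalgebra `kQ ⋊ kG`:
the free `k`-module on symbols `p ⋊ g`. -/
abbrev SmashCoalg (V : Type u) [Quiver.{v + 1} V] (G : Type*) : Type _ :=
  (PathsIn V × G) →₀ k

/-- The basis vector `p ⋊ g`. -/
def ιs (t : PathsIn V × G) : SmashCoalg k V G := Finsupp.single t 1

/-- Appending the arrow `e` to the path component of basis vectors `p ⋊ g`
(for `p` ending at the source of `e`), leaving the group component unchanged. -/
def consMapS {b c : V} (e : b ⟶ c) : SmashCoalg k V G →ₗ[k] SmashCoalg k V G :=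
  Finsupp.lsum k fun t =>
    if h : t.1.2.1 = b then Finsupp.lsingle (⟨t.1.1, c, (h ▸ t.1.2.2).cons e⟩, t.2) else 0

/-- The value of the smash comultiplication on the basis vector `p ⋊ g`:
`Δ(p ⋊ g) = Σ_{p = rq} (r ⋊ δ(q)g) ⊗ (q ⋊ g)`, where `q` runs over initial
segments of `p` (including the trivial decompositions). -/
def smashDeltaAux (δ : ∀ {a b : V}, (a ⟶ b) → G) (g : G) :
    ∀ {a b : V}, Quiver.Path a b → SmashCoalg k V G ⊗[k] SmashCoalg k V G
  | a, _, .nil => ιs k (⟨a, a, .nil⟩, g) ⊗ₜ[k] ιs k (⟨a, a, .nil⟩, g)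
  | a, c, .cons p e =>
      ιs k (⟨c, c, .nil⟩, wt @δ (p.cons e) * g) ⊗ₜ[k] ιs k (⟨a, c, p.cons e⟩, g)
      + TensorProduct.map (consMapS k e) LinearMap.id (smashDeltaAux @δ g p)

/-- The comultiplication of the smash coproduct coalgebra `kQ ⋊ kG`. -/
def smashDelta (δ : ∀ {a b : V}, (a ⟶ b) → G) :
    SmashCoalg k V G →ₗ[k] SmashCoalg k V G ⊗[k] SmashCoalg k V G :=
  Finsupp.lsum k fun t => LinearMap.toSpanSingleton k _ (smashDeltaAux k @δ t.2 t.1.2.2)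

/-- The counit of `kQ ⋊ kG`: `ε(p ⋊ g) = δ_{|p|,0}`. -/
def smashEps : SmashCoalg k V G →ₗ[k] k :=
  Finsupp.lsum k fun t => if t.1.2.2.length = 0 then LinearMap.id else 0

/-- The canonical projection `kQ ⋊ kG → kQ`, `p ⋊ g ↦ p`. -/
def smashProj : SmashCoalg k V G →ₗ[k] PathCoalg k V :=
  Finsupp.lsum k fun t => Finsupp.lsingle t.1

/-- The linear embedding `kQ → kQ ⋊ kG`, `b ↦ b ⋊ g`. -/
def embG (g : G) : PathCoalg k V →ₗ[k] SmashCoalg k V G :=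
  Finsupp.lsum k fun t => Finsupp.lsingle (t, g)

omit [Group G] in
theorem pathsIn_mk_cons_inj {a a' b c : V} (e : b ⟶ c) (p : Path a b) (q : Path a' b) :
    (⟨a', c, q.cons e⟩ : PathsIn V) = ⟨a, c, p.cons e⟩ ↔ (⟨a', b, q⟩ : PathsIn V) = ⟨a, b, p⟩ :=
  ⟨fun h => by cases h; rfl, fun h => by cases h; rfl⟩

omit [Group G] in
theorem consMapS_single {a b c : V} (e : b ⟶ c) (q : Path a b) (g : G) (d : k) :
    consMapS k e (Finsupp.single (⟨a, b, q⟩, g) d) = Finsupp.single (⟨a, c, q.cons e⟩, g) d := by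
  simp [consMapS]

omit [Group G] in
theorem consMapS_single_of_ne {a b b' c : V} (e : b ⟶ c) (q : Path a b') (hb : b' ≠ b) (g : G)
    (d : k) : consMapS k e (Finsupp.single (⟨a, b', q⟩, g) d) = 0 := by
  simp [consMapS, hb]

omit [Group G] in
theorem lapply_comp_consMapS {a b c : V} (e : b ⟶ c) (p : Path a b) (g : G) :
    Finsupp.lapply (⟨a, c, p.cons e⟩, g) ∘ₗ consMapS k e =
      (Finsupp.lapply (⟨a, b, p⟩, g) : SmashCoalg k V G →ₗ[k] k) := by
  refine Finsupp.lhom_ext fun ⟨⟨a', b', q⟩, g'⟩ d => ?_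
  rw [LinearMap.comp_apply]
  by_cases hb : b' = b
  · subst hb
    simp only [consMapS_single, Finsupp.lapply_apply, Finsupp.single_apply, Prod.mk.injEq,
      pathsIn_mk_cons_inj]
  · have hne : ((⟨a, b, p⟩ : PathsIn V), g) ≠ (⟨a', b', q⟩, g') := fun h => hb (by cases h; rfl)
    rw [consMapS_single_of_ne k e q hb, map_zero, Finsupp.lapply_apply,
      Finsupp.single_eq_of_ne hne]

theorem lapply_comp_eq_of_map_single {α β R : Type*} [CommSemiring R] {σ : α → β}
    (hσ : Function.Injective σ) {f : (α →₀ R) →ₗ[R] β →₀ R}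
    (hf : ∀ a, f (Finsupp.single a 1) = Finsupp.single (σ a) 1) (a : α) :
    Finsupp.lapply (σ a) ∘ₗ f = Finsupp.lapply a := by
  have : f = Finsupp.lmapDomain R R σ := Finsupp.basisSingleOne.ext fun a => by simp [hf]
  subst this
  ext
  simp [Finsupp.single_apply, hσ.eq_iff]

section LeftCoeff

variable {α β M N : Type*} [AddCommMonoid M] [Module k M] [AddCommMonoid N] [Module k N]

def leftCoeff (a : α) : (α →₀ k) ⊗[k] M →ₗ[k] M :=
  (TensorProduct.lid k M).toLinearMap ∘ₗ LinearMap.rTensor M (Finsupp.lapply a)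

@[simp]
theorem leftCoeff_tmul (a : α) (x : α →₀ k) (y : M) : leftCoeff k a (x ⊗ₜ y) = x a • y :=
  rfl

theorem leftCoeff_map {a : α} {b : β} {f : (β →₀ k) →ₗ[k] α →₀ k}
    (hf : Finsupp.lapply a ∘ₗ f = Finsupp.lapply b) (g : M →ₗ[k] N) (x : (β →₀ k) ⊗[k] M) :
    leftCoeff k a (TensorProduct.map f g x) = g (leftCoeff k b x) := by
  induction x using TensorProduct.induction_on with
  | zero => simp
  | tmul x y => simp [show f x a = x b from LinearMap.congr_fun hf x]
  | add x y hx hy => simp_all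

end LeftCoeff

theorem leftCoeff_smashDeltaAux (δ : ∀ {a b : V}, (a ⟶ b) → G) (g : G) {a b : V}
    (p : Path a b) :
    leftCoeff k (⟨a, b, p⟩, g) (smashDeltaAux k @δ g p) = ιs k (⟨a, a, .nil⟩, g) := by
  induction p with
  | nil => simp [leftCoeff, smashDeltaAux, ιs]
  | @cons b c p e ih =>
    have hnil : ιs k (⟨c, c, .nil⟩, wt @δ (p.cons e) * g) (⟨a, c, p.cons e⟩, g) = 0 :=
      Finsupp.single_eq_of_ne fun h => by simpa using congrArg (·.1.2.2.length) h
    rw [smashDeltaAux, map_add, leftCoeff_tmul, hnil, zero_smul, zero_add,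
      leftCoeff_map k (lapply_comp_consMapS k e p g), LinearMap.id_apply, ih]

theorem smashDelta_ιs (δ : ∀ {a b : V}, (a ⟶ b) → G) (t : PathsIn V) (g : G) :
    smashDelta k @δ (ιs k (t, g)) = smashDeltaAux k @δ g t.2.2 := by
  simp [smashDelta, ιs]

theorem smash_iso_constants_depend_on_source
    (δ δ' : ∀ {a b : V}, (a ⟶ b) → G) (gp : PathsIn V → G)
    (θ : SmashCoalg k V G →ₗ[k] SmashCoalg k V G)
    (hθ : ∀ t : PathsIn V × G, θ (ιs k t) = ιs k (t.1, gp t.1 * t.2))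
    (hcoalg : ∀ x, smashDelta k @δ' (θ x) = TensorProduct.map θ θ (smashDelta k @δ x)) :
    ∀ t : PathsIn V, gp t = gp ⟨t.1, t.1, Quiver.Path.nil⟩ := by
  rintro ⟨a, b, p⟩
  have hσ : Function.Injective fun t : PathsIn V × G => (t.1, gp t.1 * t.2) :=
    fun ⟨s, g⟩ ⟨s', g'⟩ h => by
      simp only [Prod.mk.injEq] at h
      obtain ⟨rfl, hg⟩ := h
      rw [mul_left_cancel hg]
  have hcoeff := lapply_comp_eq_of_map_single hσ hθ (⟨a, b, p⟩, 1)
  have hslice := congrArg (leftCoeff k (⟨a, b, p⟩, gp ⟨a, b, p⟩ * 1)) (hcoalg (ιs k (⟨a, b, p⟩, 1)))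
  rw [hθ, smashDelta_ιs, smashDelta_ιs, leftCoeff_smashDeltaAux, leftCoeff_map k hcoeff,
    leftCoeff_smashDeltaAux, hθ] at hslice
  simp only [mul_one] at hslice
  exact congrArg Prod.snd (Finsupp.single_left_injective one_ne_zero hslice)
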